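/- arXiv:2312.07563 — 4 statements merged into one kernel-verified Lean document; each statement's English description precedes it below -/
import Mathlib

section
/- Let U, V, W be finite-dimensional real inner product spaces and let f : U → V and g : V → W be linear maps with g ∘ f = 0. Then the kernel of the operator g* ∘ g + f ∘ f* : V → V is isomorphic (as a vector space) to the quotient ker g / im f. -/
/-!
The Laplacian `Δ = g† g + f f†` satisfies `⟪v, Δ v⟫ = ‖g v‖² + ‖f† v‖²`, so its kernel is
`ker g ⊓ ker f† = ker g ⊓ (range f)ᗮ`, the orthogonal complement of `range f` inside `ker g`.
Since `range f ≤ ker g`, that complement has the dimension of `ker g / range f`.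
-/

open Module

namespace Submodule

variable {𝕜 E : Type*} [RCLike 𝕜] [NormedAddCommGroup E] [InnerProductSpace 𝕜 E]

theorem nonempty_inf_orthogonal_equiv_quotient {K₁ K₂ : Submodule 𝕜 E}
    [FiniteDimensional 𝕜 K₂] (h : K₁ ≤ K₂) :
    Nonempty ((K₂ ⊓ K₁ᗮ : Submodule 𝕜 E) ≃ₗ[𝕜] K₂ ⧸ K₁.comap K₂.subtype) := by
  have hK₁ : finrank 𝕜 K₁ + finrank 𝕜 (K₁ᗮ ⊓ K₂ : Submodule 𝕜 E) = finrank 𝕜 K₂ :=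
    finrank_add_inf_finrank_orthogonal h
  have hcomap : finrank 𝕜 (K₁.comap K₂.subtype) = finrank 𝕜 K₁ :=
    (comapSubtypeEquivOfLe h).finrank_eq
  have hquot := finrank_quotient_add_finrank (K₁.comap K₂.subtype)
  refine ⟨LinearEquiv.ofFinrankEq _ _ ?_⟩
  rw [inf_comm]
  omega

end Submodule

namespace LinearMap

variable {𝕜 E F G : Type*} [RCLike 𝕜]
  [NormedAddCommGroup E] [InnerProductSpace 𝕜 E] [FiniteDimensional 𝕜 E]
  [NormedAddCommGroup F] [InnerProductSpace 𝕜 F] [FiniteDimensional 𝕜 F]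
  [NormedAddCommGroup G] [InnerProductSpace 𝕜 G] [FiniteDimensional 𝕜 G]

theorem inner_adjoint_comp_add_comp_adjoint_self (f : E →ₗ[𝕜] F) (g : F →ₗ[𝕜] G) (v : F) :
    inner 𝕜 v ((g.adjoint ∘ₗ g + f ∘ₗ f.adjoint) v) = ((‖g v‖ ^ 2 + ‖f.adjoint v‖ ^ 2 : ℝ) : 𝕜) := by
  rw [add_apply, comp_apply, comp_apply, inner_add_right, adjoint_inner_right,
    ← adjoint_inner_left f, inner_self_eq_norm_sq_to_K, inner_self_eq_norm_sq_to_K]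
  push_cast
  rfl

theorem ker_adjoint_comp_add_comp_adjoint (f : E →ₗ[𝕜] F) (g : F →ₗ[𝕜] G) :
    ker (g.adjoint ∘ₗ g + f ∘ₗ f.adjoint) = ker g ⊓ ker f.adjoint := by
  refine le_antisymm (fun v hv => ?_) fun v ⟨hg, hf⟩ => by simp_all
  have hnorm : ‖g v‖ ^ 2 + ‖f.adjoint v‖ ^ 2 = 0 := by
    have := inner_adjoint_comp_add_comp_adjoint_self f g v
    rw [mem_ker.mp hv, inner_zero_right, eq_comm, RCLike.ofReal_eq_zero] at this
    exact this
  rw [add_eq_zero_iff_of_nonneg (by positivity) (by positivity)] at hnorm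
  exact ⟨mem_ker.mpr (by simpa using hnorm.1), mem_ker.mpr (by simpa using hnorm.2)⟩

end LinearMap

/-- For finite-dimensional real inner product spaces `U, V, W` and linear maps
`f : U → V`, `g : V → W` with `g ∘ f = 0`, the kernel of the Hodge Laplacian
`g* ∘ g + f ∘ f* : V → V` is isomorphic to the quotient `ker g / im f`. -/
theorem kernel_laplacian_iso_homology
    {U V W : Type*}
    [NormedAddCommGroup U] [InnerProductSpace ℝ U] [FiniteDimensional ℝ U]
    [NormedAddCommGroup V] [InnerProductSpace ℝ V] [FiniteDimensional ℝ V]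
    [NormedAddCommGroup W] [InnerProductSpace ℝ W] [FiniteDimensional ℝ W]
    (f : U →ₗ[ℝ] V) (g : V →ₗ[ℝ] W) (hgf : g ∘ₗ f = 0) :
    Nonempty
      ((LinearMap.ker (LinearMap.adjoint g ∘ₗ g + f ∘ₗ LinearMap.adjoint f)) ≃ₗ[ℝ]
        ((LinearMap.ker g) ⧸ (LinearMap.range f).comap (LinearMap.ker g).subtype)) := by
  have hrange : LinearMap.range f ≤ LinearMap.ker g := LinearMap.range_le_ker_iff.mpr hgf
  rw [LinearMap.ker_adjoint_comp_add_comp_adjoint, ← LinearMap.orthogonal_range]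
  exact Submodule.nonempty_inf_orthogonal_equiv_quotient hrange
end

section
/- Let U, V, W be finite-dimensional real inner product spaces and let f : U → V and g : V → W be linear maps with g ∘ f = 0. Then V decomposes as an internal orthogonal direct sum V = im f ⊕ ker(g* g + f f*) ⊕ im g*. -/
/-!
Writing `Δ = g† g + f f†`, the identity `⟪Δ y, y⟫ = ‖g y‖² + ‖f† y‖²` gives
`ker Δ = ker g ⊓ ker f†`. Since `ker f† = (im f)ᗮ` and `ker g = (im g†)ᗮ`, the harmonic space
`ker Δ` is exactly the orthogonal complement of `im f ⊔ im g†`, and these two images are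
orthogonal because `im f ≤ ker g`.
-/

open LinearMap Submodule

namespace LinearMap

variable {𝕜 U V W : Type*} [RCLike 𝕜]
  [NormedAddCommGroup U] [InnerProductSpace 𝕜 U]
  [NormedAddCommGroup V] [InnerProductSpace 𝕜 V] [FiniteDimensional 𝕜 V]
  [NormedAddCommGroup W] [InnerProductSpace 𝕜 W] [FiniteDimensional 𝕜 W]

theorem isOrtho_range_range_adjoint {f : U →ₗ[𝕜] V} {g : V →ₗ[𝕜] W} (hgf : g ∘ₗ f = 0) :
    range f ⟂ range (adjoint g) := by
  rw [isOrtho_iff_le, orthogonal_range, adjoint_adjoint]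
  exact range_le_ker_iff.mpr hgf

variable [FiniteDimensional 𝕜 U]

noncomputable def hodgeLaplacian (f : U →ₗ[𝕜] V) (g : V →ₗ[𝕜] W) : V →ₗ[𝕜] V :=
  adjoint g ∘ₗ g + f ∘ₗ adjoint f

theorem re_inner_hodgeLaplacian_self (f : U →ₗ[𝕜] V) (g : V →ₗ[𝕜] W) (y : V) :
    RCLike.re (inner 𝕜 (hodgeLaplacian f g y) y) = ‖g y‖ ^ 2 + ‖adjoint f y‖ ^ 2 := by
  rw [hodgeLaplacian, add_apply, comp_apply, comp_apply, inner_add_left, adjoint_inner_left,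
    ← adjoint_inner_right f, map_add, inner_self_eq_norm_sq, inner_self_eq_norm_sq]

theorem ker_hodgeLaplacian (f : U →ₗ[𝕜] V) (g : V →ₗ[𝕜] W) :
    ker (hodgeLaplacian f g) = ker g ⊓ ker (adjoint f) := by
  ext y
  simp only [mem_inf, mem_ker]
  constructor
  · intro hy
    have h := re_inner_hodgeLaplacian_self f g y
    rw [hy, inner_zero_left, map_zero] at h
    simpa using (add_eq_zero_iff_of_nonneg (sq_nonneg _) (sq_nonneg _)).mp h.symm
  · rintro ⟨hg, hf⟩
    simp [hodgeLaplacian, hg, hf]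

theorem orthogonal_range_sup_range_adjoint (f : U →ₗ[𝕜] V) (g : V →ₗ[𝕜] W) :
    (range f ⊔ range (adjoint g))ᗮ = ker (hodgeLaplacian f g) := by
  rw [← inf_orthogonal, orthogonal_range, orthogonal_range, adjoint_adjoint,
    ker_hodgeLaplacian, inf_comm]

theorem isOrtho_range_ker_hodgeLaplacian (f : U →ₗ[𝕜] V) (g : V →ₗ[𝕜] W) :
    range f ⟂ ker (hodgeLaplacian f g) := by
  refine IsOrtho.symm ?_
  rw [isOrtho_iff_le, orthogonal_range, ker_hodgeLaplacian]
  exact inf_le_right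

theorem isOrtho_ker_hodgeLaplacian_range_adjoint (f : U →ₗ[𝕜] V) (g : V →ₗ[𝕜] W) :
    ker (hodgeLaplacian f g) ⟂ range (adjoint g) := by
  rw [isOrtho_iff_le, orthogonal_range, adjoint_adjoint, ker_hodgeLaplacian]
  exact inf_le_left

theorem range_sup_ker_hodgeLaplacian_sup_range_adjoint (f : U →ₗ[𝕜] V) (g : V →ₗ[𝕜] W) :
    range f ⊔ ker (hodgeLaplacian f g) ⊔ range (adjoint g) = ⊤ := by
  rw [← orthogonal_range_sup_range_adjoint, sup_right_comm]
  exact sup_orthogonal_of_hasOrthogonalProjection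

end LinearMap

/-- Hodge decomposition: for finite-dimensional real inner product spaces and linear maps
`f : U → V`, `g : V → W` with `g ∘ f = 0`, the space `V` is the internal orthogonal direct
sum of `im f`, `ker (g* g + f f*)` and `im g*`. -/
theorem hodge_decomposition
    {U V W : Type*}
    [NormedAddCommGroup U] [InnerProductSpace ℝ U] [FiniteDimensional ℝ U]
    [NormedAddCommGroup V] [InnerProductSpace ℝ V] [FiniteDimensional ℝ V]
    [NormedAddCommGroup W] [InnerProductSpace ℝ W] [FiniteDimensional ℝ W]
    (f : U →ₗ[ℝ] V) (g : V →ₗ[ℝ] W) (hgf : g ∘ₗ f = 0) :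
    (∀ x ∈ LinearMap.range f,
      ∀ y ∈ LinearMap.ker (LinearMap.adjoint g ∘ₗ g + f ∘ₗ LinearMap.adjoint f),
        (inner ℝ x y : ℝ) = 0) ∧
    (∀ x ∈ LinearMap.range f, ∀ y ∈ LinearMap.range (LinearMap.adjoint g),
        (inner ℝ x y : ℝ) = 0) ∧
    (∀ x ∈ LinearMap.ker (LinearMap.adjoint g ∘ₗ g + f ∘ₗ LinearMap.adjoint f),
      ∀ y ∈ LinearMap.range (LinearMap.adjoint g), (inner ℝ x y : ℝ) = 0) ∧
    (LinearMap.range f ⊔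
      LinearMap.ker (LinearMap.adjoint g ∘ₗ g + f ∘ₗ LinearMap.adjoint f) ⊔
      LinearMap.range (LinearMap.adjoint g) = ⊤) :=
  ⟨isOrtho_iff_inner_eq.mp (isOrtho_range_ker_hodgeLaplacian f g),
    isOrtho_iff_inner_eq.mp (isOrtho_range_range_adjoint hgf),
    isOrtho_iff_inner_eq.mp (isOrtho_ker_hodgeLaplacian_range_adjoint f g),
    range_sup_ker_hodgeLaplacian_sup_range_adjoint f g⟩
end

section
/- Persistent Hodge theorem: Let (V, d^V) ⊆ (W, d^W) be finite-dimensional inner product chain complexes, where V_q ⊆ W_q for each q, the inner product on V_q is inherited from W_q, and d^V_q is the restriction of d^W_q. Fix q, let Θ = {w ∈ W_{q+1} : d^W_{q+1} w ∈ V_q}, let D : Θ → V_q be the corestriction of d^W_{q+1}, and let Δ = (d^V_q)* d^V_q + D D* : V_q → V_q. Then ker Δ is isomorphic to ker d^V_q / (im d^W_{q+1} ∩ V_q). -/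
/-!
With `A = dV_q` and `D` the corestriction of `dW_{q+1}`, `⟪Δx, x⟫ = ‖Ax‖² + ‖D*x‖²`, so
`ker Δ = ker A ⊓ ker D* = ker A ⊓ (im D)ᗮ`. As `im D = im dW_{q+1} ∩ V_q` lies in `ker A`
(because `d ∘ d = 0`), this is the orthogonal complement of `im D` inside `ker A`, hence a
linear complement, and complements are isomorphic to the quotient.
-/
open LinearMap Submodule

section
variable {R M : Type*} [Ring R] [AddCommGroup M] [Module R M]

noncomputable def Submodule.quotientComapSubtypeEquivInf {p q r : Submodule R M}
    (hqr : IsCompl q r) (hqp : q ≤ p) : (p ⧸ q.comap p.subtype) ≃ₗ[R] ↥(p ⊓ r) :=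
  (quotientEquivOfIsCompl _ _ (isCompl_comap_subtype_of_isCompl_of_le hqr hqp)).trans <|
    (LinearEquiv.ofEq _ _ (by rw [comap_inf, comap_subtype_self, top_inf_eq])).trans
      (comapSubtypeEquivOfLe inf_le_left)

variable {N : Type*} [AddCommGroup N] [Module R N]

theorem LinearMap.range_codRestrict_comp_comap_subtype (d : N →ₗ[R] M) (V : Submodule R M) :
    range (codRestrict V (d ∘ₗ (V.comap d).subtype) fun c => c.2) =
      (range d ⊓ V).comap V.subtype := by
  ext ⟨v, hv⟩
  constructor
  · rintro ⟨⟨w, _⟩, h⟩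
    exact ⟨⟨w, congrArg Subtype.val h⟩, hv⟩
  · rintro ⟨⟨w, rfl⟩, -⟩
    exact ⟨⟨w, hv⟩, rfl⟩
end

section
variable {𝕜 E F G : Type*} [RCLike 𝕜]
  [NormedAddCommGroup E] [InnerProductSpace 𝕜 E] [FiniteDimensional 𝕜 E]
  [NormedAddCommGroup F] [InnerProductSpace 𝕜 F] [FiniteDimensional 𝕜 F]
  [NormedAddCommGroup G] [InnerProductSpace 𝕜 G] [FiniteDimensional 𝕜 G]

theorem LinearMap.ker_adjoint_comp_add_comp_adjoint_s5 (A : E →ₗ[𝕜] F) (B : G →ₗ[𝕜] E) :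
    ker (A.adjoint ∘ₗ A + B ∘ₗ B.adjoint) = ker A ⊓ (range B)ᗮ := by
  rw [orthogonal_range]
  refine le_antisymm (fun x hx => ?_) fun x ⟨hA, hB⟩ => by simp_all
  have hsum : ‖A x‖ ^ 2 + ‖B.adjoint x‖ ^ 2 = 0 := by
    have h := congrArg (fun y => RCLike.re (inner 𝕜 x y)) (mem_ker.mp hx)
    simpa [inner_add_right, adjoint_inner_right, ← adjoint_inner_left B,
      inner_self_eq_norm_sq] using h
  rw [add_eq_zero_iff_of_nonneg (sq_nonneg _) (sq_nonneg _)] at hsum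
  simpa using hsum

noncomputable def LinearMap.kerLaplacianEquivHomology (A : E →ₗ[𝕜] F) (B : G →ₗ[𝕜] E)
    (hAB : A ∘ₗ B = 0) :
    ker (A.adjoint ∘ₗ A + B ∘ₗ B.adjoint) ≃ₗ[𝕜] ker A ⧸ (range B).comap (ker A).subtype :=
  (LinearEquiv.ofEq _ _ (ker_adjoint_comp_add_comp_adjoint_s5 A B)).trans
    (quotientComapSubtypeEquivInf (range B).isCompl_orthogonal
      (range_le_ker_iff.mpr hAB)).symm
end

theorem persistent_hodge_theorem_general
    {W1 W0 Wm : Type*}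
    [NormedAddCommGroup W1] [InnerProductSpace ℝ W1] [FiniteDimensional ℝ W1]
    [NormedAddCommGroup W0] [InnerProductSpace ℝ W0] [FiniteDimensional ℝ W0]
    [NormedAddCommGroup Wm] [InnerProductSpace ℝ Wm] [FiniteDimensional ℝ Wm]
    (d1 : W1 →ₗ[ℝ] W0) (d0 : W0 →ₗ[ℝ] Wm) (hdd : d0 ∘ₗ d1 = 0)
    (V0 : Submodule ℝ W0) (Vm : Submodule ℝ Wm)
    (hd0 : ∀ x ∈ V0, d0 x ∈ Vm) :
    Nonempty
      ((LinearMap.ker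
          ((LinearMap.adjoint (d0.restrict hd0)) ∘ₗ (d0.restrict hd0) +
            (LinearMap.codRestrict V0 (d1 ∘ₗ (Submodule.comap d1 V0).subtype)
                (fun c => c.2)) ∘ₗ
              (LinearMap.adjoint
                (LinearMap.codRestrict V0 (d1 ∘ₗ (Submodule.comap d1 V0).subtype)
                  (fun c => c.2))))) ≃ₗ[ℝ]
        ((LinearMap.ker (d0.restrict hd0)) ⧸
          ((LinearMap.range d1 ⊓ V0).comap V0.subtype).comap
            (LinearMap.ker (d0.restrict hd0)).subtype)) := by
  set D := codRestrict V0 (d1 ∘ₗ (V0.comap d1).subtype) fun c => c.2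
  have hD : d0.restrict hd0 ∘ₗ D = 0 := by
    ext x
    exact congr($hdd x)
  rw [← range_codRestrict_comp_comap_subtype]
  exact ⟨kerLaplacianEquivHomology _ D hD⟩

/-- Persistent Hodge theorem.  Let `(V, dV) ⊆ (W, dW)` be a pair of finite-dimensional real
inner product chain complexes (displayed here in degrees `q+1, q, q-1` with ambient spaces
`W1, W0, Wm` and subspaces `V1 ≤ W1`, `V0 ≤ W0`, `Vm ≤ Wm`, the boundary of the smaller
complex being the restriction of that of the larger one).  With
`Θ = {w ∈ W_{q+1} : dW w ∈ V_q}`, `D : Θ → V_q` the corestriction of `dW_{q+1}`, and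
`Δ = (dV_q)* dV_q + D D*`, the kernel of `Δ` is isomorphic to
`ker dV_q / (im dW_{q+1} ∩ V_q)`. -/
theorem persistent_hodge_theorem
    {W1 W0 Wm : Type*}
    [NormedAddCommGroup W1] [InnerProductSpace ℝ W1] [FiniteDimensional ℝ W1]
    [NormedAddCommGroup W0] [InnerProductSpace ℝ W0] [FiniteDimensional ℝ W0]
    [NormedAddCommGroup Wm] [InnerProductSpace ℝ Wm] [FiniteDimensional ℝ Wm]
    (d1 : W1 →ₗ[ℝ] W0) (d0 : W0 →ₗ[ℝ] Wm) (hdd : d0 ∘ₗ d1 = 0)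
    (V1 : Submodule ℝ W1) (V0 : Submodule ℝ W0) (Vm : Submodule ℝ Wm)
    (hd1 : ∀ x ∈ V1, d1 x ∈ V0) (hd0 : ∀ x ∈ V0, d0 x ∈ Vm) :
    Nonempty
      ((LinearMap.ker
          ((LinearMap.adjoint (d0.restrict hd0)) ∘ₗ (d0.restrict hd0) +
            (LinearMap.codRestrict V0 (d1 ∘ₗ (Submodule.comap d1 V0).subtype)
                (fun c => c.2)) ∘ₗ
              (LinearMap.adjoint
                (LinearMap.codRestrict V0 (d1 ∘ₗ (Submodule.comap d1 V0).subtype)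
                  (fun c => c.2))))) ≃ₗ[ℝ]
        ((LinearMap.ker (d0.restrict hd0)) ⧸
          ((LinearMap.range d1 ⊓ V0).comap V0.subtype).comap
            (LinearMap.ker (d0.restrict hd0)).subtype)) :=
  persistent_hodge_theorem_general d1 d0 hdd V0 Vm hd0
end

section
/- Let w be a weight function on the simplices of a simplicial complex X valued in a commutative ring R with the property that w(σ) divides w(τ) whenever σ ≤ τ, and suppose quotients w(τ)/w(σ) are chosen compatibly, i.e., there is φ : {face pairs} → R with φ(τ,σ)·w(σ) = w(τ) and satisfying φ(d_iσ, d_{j−1}d_iσ) φ(σ, d_iσ) = φ(d_jσ, d_id_jσ) φ(σ, d_jσ) for all 0 ≤ i < j ≤ q. Then the weighted boundary operator ∂(σ) = Σ_{i=0}^{q} (−1)^i φ(σ, d_iσ) d_iσ on the free R-module generated by simplices satisfies ∂ ∘ ∂ = 0. -/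
/-
Expanding `∂ ∂ σ` gives a double sum over `i ≤ q`, `k < q` of
`(-1)^(i+k) φ(σ, dᵢσ) φ(dᵢσ, d_k dᵢσ) · d_k dᵢσ`. For `i ≤ k` the face identity
`dᵢ d_{k+1} = d_k dᵢ` makes the terms `(i, k)` and `(k + 1, i)` multiples of the same simplex,
with signs of opposite parity, and the compatibility condition on `φ` makes their coefficients
equal up to that sign; so the terms cancel in pairs.
-/

/-- Chains of a simplicial complex `K` over a commutative ring `R`, modelled as the free
`R`-module on sorted vertex lists spanning a face of `K`. -/
abbrev WtChains {ι : Type*} [LinearOrder ι] (K : Set (Finset ι)) (R : Type*)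
    [CommRing R] := ({l : List ι // l.Pairwise (· < ·) ∧ l.toFinset ∈ K} →₀ R)

/-- The `φ`-weighted boundary operator
`∂(σ) = Σᵢ (−1)ⁱ φ(σ, dᵢσ) dᵢσ`, on the chains of a simplicial complex `K` (required to be
closed under subsets), where `φ σ τ` is evaluated on ordered simplices presented as sorted
lists and `dᵢσ` deletes the `i`-th vertex. -/
noncomputable def weightedBoundary {ι : Type*} [LinearOrder ι] (K : Set (Finset ι))
    (hK : ∀ s ∈ K, ∀ t ⊆ s, t ∈ K) (R : Type*) [CommRing R]
    (φ : List ι → List ι → R) :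
    WtChains K R →ₗ[R] WtChains K R :=
  Finsupp.lift _ R _ (fun l => ∑ i : Fin l.1.length,
    ((-1 : R) ^ (i : ℕ) * φ l.1 (l.1.eraseIdx i)) •
      Finsupp.single
        ⟨l.1.eraseIdx i,
          ⟨l.2.1.sublist (List.eraseIdx_sublist l.1 i),
            hK l.1.toFinset l.2.2 (l.1.eraseIdx i).toFinset
              (by
                intro x hx
                rw [List.mem_toFinset] at hx ⊢
                exact (List.eraseIdx_sublist l.1 i).subset hx)⟩⟩
        (1 : R))

open Finset

theorem List.eraseIdx_succ_eraseIdx_of_le {α : Type*} (l : List α) {i k : ℕ} (h : i ≤ k) :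
    (l.eraseIdx (k + 1)).eraseIdx i = (l.eraseIdx i).eraseIdx k := by
  induction l generalizing i k with
  | nil => simp
  | cons a t ih =>
    cases i with
    | zero => cases k <;> simp [List.eraseIdx]
    | succ i =>
      cases k with
      | zero => omega
      | succ k => simp [List.eraseIdx, ih (Nat.le_of_succ_le_succ h)]

theorem Finset.sum_range_succ_sum_range_eq_zero_of_antisymm {M : Type*} [AddCommGroup M]
    (f : ℕ → ℕ → M) (m : ℕ) (hf : ∀ i k, i ≤ k → k < m → f (k + 1) i = -f i k) :
    ∑ i ∈ range (m + 1), ∑ k ∈ range m, f i k = 0 := by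
  induction m with
  | zero => simp
  | succ m ih =>
    have hinner : ∑ i ∈ range (m + 1), ∑ k ∈ range (m + 1), f i k =
        ∑ i ∈ range (m + 1), ∑ k ∈ range m, f i k + ∑ i ∈ range (m + 1), f i m := by
      rw [← sum_add_distrib]
      exact sum_congr rfl fun i _ => sum_range_succ _ _
    have hlast : ∑ k ∈ range (m + 1), f (m + 1) k = -∑ i ∈ range (m + 1), f i m := by
      rw [← sum_neg_distrib]
      exact sum_congr rfl fun k hk => hf k m (Nat.lt_succ_iff.mp (mem_range.mp hk)) m.lt_succ_self
    rw [sum_range_succ _ (m + 1), hinner, hlast,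
      ih fun i k hik hk => hf i k hik (Nat.lt_succ_of_lt hk)]
    abel

section WeightedBoundary

variable {ι : Type*} [LinearOrder ι] {K : Set (Finset ι)} (hK : ∀ s ∈ K, ∀ t ⊆ s, t ∈ K)
  {R : Type*} [CommRing R]

def simplexFace (σ : {l : List ι // l.Pairwise (· < ·) ∧ l.toFinset ∈ K}) (i : ℕ) :
    {l : List ι // l.Pairwise (· < ·) ∧ l.toFinset ∈ K} :=
  ⟨σ.1.eraseIdx i,
    ⟨σ.2.1.sublist (List.eraseIdx_sublist σ.1 i),
      hK σ.1.toFinset σ.2.2 (σ.1.eraseIdx i).toFinset fun x hx => by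
        rw [List.mem_toFinset] at hx ⊢
        exact (List.eraseIdx_sublist σ.1 i).subset hx⟩⟩

theorem length_simplexFace (σ : {l : List ι // l.Pairwise (· < ·) ∧ l.toFinset ∈ K}) {i : ℕ}
    (hi : i < σ.1.length) : (simplexFace hK σ i).1.length = σ.1.length - 1 :=
  List.length_eraseIdx_of_lt hi

theorem simplexFace_simplexFace_succ_of_le
    (σ : {l : List ι // l.Pairwise (· < ·) ∧ l.toFinset ∈ K}) {i k : ℕ} (h : i ≤ k) :
    simplexFace hK (simplexFace hK σ (k + 1)) i = simplexFace hK (simplexFace hK σ i) k :=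
  Subtype.ext (List.eraseIdx_succ_eraseIdx_of_le σ.1 h)

theorem weightedBoundary_single (φ : List ι → List ι → R)
    (σ : {l : List ι // l.Pairwise (· < ·) ∧ l.toFinset ∈ K}) (r : R) :
    weightedBoundary K hK R φ (Finsupp.single σ r) =
      ∑ i ∈ range σ.1.length,
        Finsupp.single (simplexFace hK σ i) (r * ((-1) ^ i * φ σ.1 (σ.1.eraseIdx i))) := by
  rw [weightedBoundary, Finsupp.lift_apply, Finsupp.sum_single_index (by simp), smul_sum,
    ← Fin.sum_univ_eq_sum_range
      (fun i => Finsupp.single (simplexFace hK σ i) (r * ((-1) ^ i * φ σ.1 (σ.1.eraseIdx i))))]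
  refine sum_congr rfl fun i _ => ?_
  rw [smul_smul, Finsupp.smul_single_one]
  rfl

theorem weightedBoundary_weightedBoundary_single (φ : List ι → List ι → R)
    (σ : {l : List ι // l.Pairwise (· < ·) ∧ l.toFinset ∈ K}) (r : R) {m : ℕ}
    (hσ : σ.1.length = m + 1) :
    weightedBoundary K hK R φ (weightedBoundary K hK R φ (Finsupp.single σ r)) =
      ∑ i ∈ range (m + 1), ∑ k ∈ range m,
        Finsupp.single (simplexFace hK (simplexFace hK σ i) k)
          (r * ((-1) ^ i * φ σ.1 (σ.1.eraseIdx i)) *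
            ((-1) ^ k * φ (σ.1.eraseIdx i) ((σ.1.eraseIdx i).eraseIdx k))) := by
  rw [weightedBoundary_single, map_sum, hσ]
  refine sum_congr rfl fun i hi => ?_
  rw [weightedBoundary_single, length_simplexFace hK σ (hσ ▸ mem_range.mp hi), hσ,
    Nat.add_sub_cancel]
  rfl

end WeightedBoundary

theorem weightedBoundary_comp_eq_zero_general {ι : Type*} [LinearOrder ι] (K : Set (Finset ι))
    (hK : ∀ s ∈ K, ∀ t ⊆ s, t ∈ K) (R : Type*) [CommRing R]
    (φ : List ι → List ι → R)
    (hcompat : ∀ l : List ι, l.Pairwise (· < ·) → l.toFinset ∈ K →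
      ∀ i j : ℕ, i < j → j < l.length →
        φ (l.eraseIdx i) ((l.eraseIdx i).eraseIdx (j - 1)) * φ l (l.eraseIdx i) =
          φ (l.eraseIdx j) ((l.eraseIdx j).eraseIdx i) * φ l (l.eraseIdx j)) :
    (weightedBoundary K hK R φ) ∘ₗ (weightedBoundary K hK R φ) = 0 := by
  refine Finsupp.lhom_ext fun σ r => ?_
  rw [LinearMap.comp_apply, LinearMap.zero_apply]
  cases hσ : σ.1.length with
  | zero => rw [weightedBoundary_single, hσ, sum_range_zero, map_zero]
  | succ m =>
    rw [weightedBoundary_weightedBoundary_single hK φ σ r hσ]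
    refine sum_range_succ_sum_range_eq_zero_of_antisymm _ m fun i k hik hkm => ?_
    have hφ := hcompat σ.1 σ.2.1 σ.2.2 i (k + 1) (by omega) (by omega)
    rw [Nat.add_sub_cancel] at hφ
    rw [simplexFace_simplexFace_succ_of_le hK σ hik, ← Finsupp.single_neg]
    congr 1
    linear_combination (r * (-1) ^ (i + k)) * hφ

/-- For a weight function `w` on the simplices of a simplicial complex `K`, valued in a
commutative ring `R`, such that `w σ ∣ w τ` for `σ ≤ τ`, with compatibly chosen quotients
`φ(τ, σ) · w(σ) = w(τ)` satisfying
`φ(dᵢσ, d_{j−1}dᵢσ) φ(σ, dᵢσ) = φ(dⱼσ, dᵢdⱼσ) φ(σ, dⱼσ)` for `i < j`, the weighted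
boundary operator `∂(σ) = Σᵢ (−1)ⁱ φ(σ, dᵢσ) dᵢσ` satisfies `∂ ∘ ∂ = 0`. -/
theorem weightedBoundary_comp_eq_zero {ι : Type*} [LinearOrder ι] (K : Set (Finset ι))
    (hK : ∀ s ∈ K, ∀ t ⊆ s, t ∈ K) (R : Type*) [CommRing R]
    (w : Finset ι → R)
    (hdvd : ∀ s ∈ K, ∀ t ⊆ s, w t ∣ w s)
    (φ : List ι → List ι → R)
    (hφw : ∀ l : List ι, l.Pairwise (· < ·) → l.toFinset ∈ K →
      ∀ i < l.length, φ l (l.eraseIdx i) * w (l.eraseIdx i).toFinset = w l.toFinset)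
    (hcompat : ∀ l : List ι, l.Pairwise (· < ·) → l.toFinset ∈ K →
      ∀ i j : ℕ, i < j → j < l.length →
        φ (l.eraseIdx i) ((l.eraseIdx i).eraseIdx (j - 1)) * φ l (l.eraseIdx i) =
          φ (l.eraseIdx j) ((l.eraseIdx j).eraseIdx i) * φ l (l.eraseIdx j)) :
    (weightedBoundary K hK R φ) ∘ₗ (weightedBoundary K hK R φ) = 0 :=
  weightedBoundary_comp_eq_zero_general K hK R φ hcompat
end
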